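/- For every m ≥ 2, complex numbers w_1, …, w_{m−1}, and v ∈ ℝ, the function v ↦ t^{(m−1)}(v; w_1, …, w_{m−2}) is differentiable and t^{(m)}(v; w_1, …, w_{m−1}) = w_{m−1} · t^{(m−1)}(v; w_1, …, w_{m−2}) − (d/dv) t^{(m−1)}(v; w_1, …, w_{m−2}). -/

import Mathlib

/-!
On the contour `b = airyContour r = r√3/2 + i|r|/2` one has `b³ = i|r|³`, so
`|e^{i(b³/3 + vb)}| = e^{-|r|³/3 - v|r|/2}`. Hence, for any continuous weight `g` of polynomial
growth, `e^{i(b³/3 + vb)} g(b) b'` is dominated, locally uniformly in `v`, by an integrable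
function, and one may differentiate under the integral sign: `d/dv` multiplies the weight by
`ib`. The recurrence then follows by integrating the identity
`∏_{j ≤ m-1} (w_j - ib) = w_{m-1} ∏_{j ≤ m-2} (w_j - ib) - ib ∏_{j ≤ m-2} (w_j - ib)`.
-/

open MeasureTheory

/-- The contour from `∞·e^{5iπ/6}` to `∞·e^{iπ/6}` through the origin:
`γ(r) = |r|·e^{5iπ/6}` for `r ≤ 0` and `γ(r) = r·e^{iπ/6}` for `r ≥ 0`. -/
noncomputable def airyContour (r : ℝ) : ℂ :=
  if r ≤ 0 then ((-r : ℝ) : ℂ) * Complex.exp (Complex.I * (5 * (Real.pi : ℂ) / 6))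
  else ((r : ℝ) : ℂ) * Complex.exp (Complex.I * ((Real.pi : ℂ) / 6))

/-- The derivative (velocity) of the contour `airyContour`. -/
noncomputable def airyContourDeriv (r : ℝ) : ℂ :=
  if r ≤ 0 then -Complex.exp (Complex.I * (5 * (Real.pi : ℂ) / 6))
  else Complex.exp (Complex.I * ((Real.pi : ℂ) / 6))

/-- `t^{(m)}(v; w_1, …, w_{m−1}) = (1/2π) ∫ e^{i(b³/3 + vb)} ∏_{j=1}^{m−1}(w_j − ib) db`
over the contour from `∞·e^{5iπ/6}` to `∞·e^{iπ/6}`; for `m = 1` this is the Airy function. -/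
noncomputable def tFun (m : ℕ) (w : ℕ → ℂ) (v : ℝ) : ℂ :=
  (1 / (2 * Real.pi)) *
    ∫ r : ℝ,
      Complex.exp (Complex.I * ((airyContour r) ^ 3 / 3 + (v : ℂ) * airyContour r)) *
        (∏ j ∈ Finset.Icc 1 (m - 1), (w j - Complex.I * airyContour r)) *
        airyContourDeriv r

open Complex

lemma exp_I_mul_pi_div_six :
    exp (I * (Real.pi / 6)) = (Real.sqrt 3 / 2 : ℝ) + (1 / 2 : ℝ) * I := by
  rw [mul_comm, ← ofReal_ofNat, ← ofReal_div, exp_mul_I, ← ofReal_cos, ← ofReal_sin,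
    Real.cos_pi_div_six, Real.sin_pi_div_six]

lemma exp_I_mul_five_pi_div_six :
    exp (I * (5 * Real.pi / 6)) = (-(Real.sqrt 3 / 2) : ℝ) + (1 / 2 : ℝ) * I := by
  have h : (5 * Real.pi / 6 : ℂ) = (Real.pi - Real.pi / 6 : ℝ) := by push_cast; ring
  rw [h, mul_comm, exp_mul_I, ← ofReal_cos, ← ofReal_sin, Real.cos_pi_sub, Real.sin_pi_sub,
    Real.cos_pi_div_six, Real.sin_pi_div_six]

lemma airyContour_eq (r : ℝ) :
    airyContour r = (r * Real.sqrt 3 / 2 : ℝ) + (|r| / 2 : ℝ) * I := by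
  unfold airyContour
  split_ifs with hr
  · rw [exp_I_mul_five_pi_div_six, abs_of_nonpos hr]; push_cast; ring
  · rw [exp_I_mul_pi_div_six, abs_of_pos (not_le.mp hr)]; push_cast; ring

@[fun_prop]
lemma continuous_airyContour : Continuous airyContour := by
  rw [funext airyContour_eq]
  fun_prop

lemma airyContour_im (r : ℝ) : (airyContour r).im = |r| / 2 := by
  simp [airyContour_eq]

lemma norm_airyContour (r : ℝ) : ‖airyContour r‖ = |r| := by
  have h : (r * Real.sqrt 3 / 2) ^ 2 + (|r| / 2) ^ 2 = |r| ^ 2 := by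
    rw [div_pow, div_pow, mul_pow, Real.sq_sqrt zero_le_three, sq_abs]
    ring
  rw [airyContour_eq, norm_add_mul_I, h, Real.sqrt_sq (abs_nonneg r)]

lemma airyContour_pow_three (r : ℝ) : airyContour r ^ 3 = I * ((|r| : ℝ) : ℂ) ^ 3 := by
  have hs : (Real.sqrt 3 : ℂ) ^ 2 = 3 := by rw [← ofReal_pow]; simp
  have ha : ((|r| : ℝ) : ℂ) ^ 2 = (r : ℂ) ^ 2 := by rw [← ofReal_pow, sq_abs]; simp
  rw [airyContour_eq]
  push_cast
  set s : ℂ := (Real.sqrt 3 : ℂ)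
  set a : ℂ := ((|r| : ℝ) : ℂ)
  linear_combination (3 / 8 * r * s * a ^ 2 + I * a ^ 3 / 8) * I_sq
    + (3 / 8 * r ^ 2 * I * a + r ^ 3 * s / 8) * hs - (3 / 8 * r * s + 9 / 8 * I * a) * ha

lemma norm_airyContourDeriv (r : ℝ) : ‖airyContourDeriv r‖ = 1 := by
  unfold airyContourDeriv
  split_ifs
  · simpa [mul_div_assoc] using norm_exp_I_mul_ofReal (5 * Real.pi / 6)
  · simpa using norm_exp_I_mul_ofReal (Real.pi / 6)

lemma measurable_airyContourDeriv : Measurable airyContourDeriv :=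
  Measurable.ite measurableSet_Iic measurable_const measurable_const

lemma norm_exp_I_mul_airyPhase (v r : ℝ) :
    ‖exp (I * (airyContour r ^ 3 / 3 + v * airyContour r))‖
      = Real.exp (-(v * |r| / 2) - |r| ^ 3 / 3) := by
  have him : (airyContour r ^ 3 / 3 + v * airyContour r).im = |r| ^ 3 / 3 + v * (|r| / 2) := by
    simp [airyContour_pow_three, airyContour_im, ← ofReal_pow]
  rw [norm_exp, mul_re, I_re, I_im, him]
  ring_nf

lemma mul_sub_cube_div_three_le {a t : ℝ} (ha : 0 ≤ a) (ht : 0 ≤ t) :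
    a * t - t ^ 3 / 3 ≤ 2 * (a + 3) ^ 2 - t ^ 2 := by
  rcases le_total t (a + 3) with h | h
  · nlinarith [mul_le_mul h h ht (by linarith), mul_le_mul_of_nonneg_left h ha]
  · nlinarith [mul_le_mul_of_nonneg_left h (sq_nonneg t),
      mul_nonneg (mul_nonneg ha ht) (show 0 ≤ t - 3 by linarith)]

lemma integrable_one_add_abs_pow_mul_exp_sub_cube (n : ℕ) (c : ℝ) :
    Integrable fun r : ℝ => (1 + |r|) ^ n * Real.exp (c * |r| - |r| ^ 3 / 3) := by
  have hcont : Continuous fun r : ℝ => (1 + |r|) ^ n * Real.exp (c * |r| - |r| ^ 3 / 3) := by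
    fun_prop
  refine ((integrable_exp_neg_mul_sq one_pos).const_mul
    (Real.exp (2 * (n + |c| + 3) ^ 2))).mono' hcont.aestronglyMeasurable
    (Filter.Eventually.of_forall fun r => ?_)
  have hpow : (1 + |r|) ^ n ≤ Real.exp (n * |r|) := by
    rw [Real.exp_nat_mul]
    exact pow_le_pow_left₀ (by positivity) (by linarith [Real.add_one_le_exp |r|]) n
  have hexp : n * |r| + (c * |r| - |r| ^ 3 / 3) ≤ 2 * (n + |c| + 3) ^ 2 + -1 * r ^ 2 := by
    have := mul_sub_cube_div_three_le (a := n + |c|) (by positivity) (abs_nonneg r)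
    nlinarith [le_abs_self c, abs_nonneg r, sq_abs r]
  rw [Real.norm_of_nonneg (by positivity), ← Real.exp_add]
  calc (1 + |r|) ^ n * Real.exp (c * |r| - |r| ^ 3 / 3)
      ≤ Real.exp (n * |r|) * Real.exp (c * |r| - |r| ^ 3 / 3) := by gcongr
    _ ≤ Real.exp (2 * (n + |c| + 3) ^ 2 + -1 * r ^ 2) := by
        rw [← Real.exp_add]; exact Real.exp_le_exp.mpr hexp

def PolynomialGrowth {E F : Type*} [Norm E] [Norm F] (g : E → F) : Prop :=
  ∃ C : ℝ, ∃ n : ℕ, ∀ z, ‖g z‖ ≤ C * (1 + ‖z‖) ^ n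

namespace PolynomialGrowth

variable {E F : Type*} [Norm E] [SeminormedCommRing F]

lemma const (c : F) : PolynomialGrowth fun _ : E => c :=
  ⟨‖c‖, 0, fun _ => by simp⟩

lemma mul {f g : E → F} (hf : PolynomialGrowth f) (hg : PolynomialGrowth g) :
    PolynomialGrowth (f * g) := by
  obtain ⟨C, n, hC⟩ := hf
  obtain ⟨D, k, hD⟩ := hg
  refine ⟨C * D, n + k, fun z => ?_⟩
  calc ‖f z * g z‖ ≤ ‖f z‖ * ‖g z‖ := norm_mul_le _ _
    _ ≤ C * (1 + ‖z‖) ^ n * (D * (1 + ‖z‖) ^ k) :=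
      mul_le_mul (hC z) (hD z) (norm_nonneg _) ((norm_nonneg _).trans (hC z))
    _ = C * D * (1 + ‖z‖) ^ (n + k) := by ring

lemma finset_prod {ι : Type*} (s : Finset ι) {f : ι → E → F}
    (hf : ∀ i ∈ s, PolynomialGrowth (f i)) : PolynomialGrowth fun z => ∏ i ∈ s, f i z := by
  rw [← Finset.prod_fn]
  exact Finset.prod_induction f PolynomialGrowth (fun _ _ => mul) (const 1) hf

lemma I_mul_id_mul {g : ℂ → ℂ} (hg : PolynomialGrowth g) :
    PolynomialGrowth fun z => I * z * g z := by
  obtain ⟨C, n, hC⟩ := hg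
  refine ⟨C, n + 1, fun z => ?_⟩
  calc ‖I * z * g z‖ = ‖z‖ * ‖g z‖ := by simp
    _ ≤ (1 + ‖z‖) * (C * (1 + ‖z‖) ^ n) :=
      mul_le_mul (by linarith) (hC z) (norm_nonneg _) (by positivity)
    _ = C * (1 + ‖z‖) ^ (n + 1) := by ring

end PolynomialGrowth

lemma polynomialGrowth_const_sub_I_mul (c : ℂ) : PolynomialGrowth fun z : ℂ => c - I * z :=
  ⟨‖c‖ + 1, 1, fun z => by
    calc ‖c - I * z‖ ≤ ‖c‖ + ‖z‖ := by simpa using norm_sub_le c (I * z)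
      _ ≤ (‖c‖ + 1) * (1 + ‖z‖) ^ 1 := by nlinarith [norm_nonneg c, norm_nonneg z]⟩

noncomputable def airyIntegrand (g : ℂ → ℂ) (v r : ℝ) : ℂ :=
  exp (I * (airyContour r ^ 3 / 3 + v * airyContour r)) * g (airyContour r) * airyContourDeriv r

lemma aestronglyMeasurable_airyIntegrand {g : ℂ → ℂ} (hg : Continuous g) (v : ℝ) :
    AEStronglyMeasurable (airyIntegrand g v) := by
  refine Continuous.aestronglyMeasurable ?_ |>.mul
    measurable_airyContourDeriv.aestronglyMeasurable
  fun_prop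

lemma norm_airyIntegrand_le {g : ℂ → ℂ} {C : ℝ} {n : ℕ} (hg : ∀ z, ‖g z‖ ≤ C * (1 + ‖z‖) ^ n)
    {c v : ℝ} (hv : |v| ≤ c) (r : ℝ) :
    ‖airyIntegrand g v r‖ ≤ C * ((1 + |r|) ^ n * Real.exp (c * |r| - |r| ^ 3 / 3)) := by
  have hexp : -(v * |r| / 2) - |r| ^ 3 / 3 ≤ c * |r| - |r| ^ 3 / 3 := by
    have : -v / 2 ≤ c := by linarith [neg_abs_le v, abs_nonneg v]
    nlinarith [mul_le_mul_of_nonneg_right this (abs_nonneg r)]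
  have hgr := hg (airyContour r)
  rw [norm_airyContour] at hgr
  calc ‖airyIntegrand g v r‖
      = Real.exp (-(v * |r| / 2) - |r| ^ 3 / 3) * ‖g (airyContour r)‖ := by
        rw [airyIntegrand, norm_mul, norm_mul, norm_airyContourDeriv, mul_one,
          norm_exp_I_mul_airyPhase]
    _ ≤ Real.exp (c * |r| - |r| ^ 3 / 3) * (C * (1 + |r|) ^ n) :=
        mul_le_mul (Real.exp_le_exp.mpr hexp) hgr (norm_nonneg _) (Real.exp_nonneg _)
    _ = C * ((1 + |r|) ^ n * Real.exp (c * |r| - |r| ^ 3 / 3)) := by ring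

lemma integrable_airyIntegrand {g : ℂ → ℂ} (hg : Continuous g) (hgrowth : PolynomialGrowth g)
    (v : ℝ) : Integrable (airyIntegrand g v) := by
  obtain ⟨C, n, hC⟩ := hgrowth
  exact ((integrable_one_add_abs_pow_mul_exp_sub_cube n |v|).const_mul C).mono'
    (aestronglyMeasurable_airyIntegrand hg v)
    (Filter.Eventually.of_forall (norm_airyIntegrand_le hC le_rfl))

lemma hasDerivAt_airyIntegrand (g : ℂ → ℂ) (v r : ℝ) :
    HasDerivAt (fun v => airyIntegrand g v r) (airyIntegrand (fun z => I * z * g z) v r) v := by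
  set γ := airyContour r
  have hphase : HasDerivAt (fun z : ℂ => I * (γ ^ 3 / 3 + z * γ)) (I * γ) v := by
    simpa using (((hasDerivAt_id (v : ℂ)).mul_const γ).const_add (γ ^ 3 / 3)).const_mul I
  refine (((hphase.cexp.comp_ofReal).mul_const (g γ)).mul_const
    (airyContourDeriv r)).congr_deriv ?_
  simp only [airyIntegrand, γ]
  ring

lemma hasDerivAt_integral_airyIntegrand {g : ℂ → ℂ} (hg : Continuous g)
    (hgrowth : PolynomialGrowth g) (v : ℝ) :
    HasDerivAt (fun v => ∫ r, airyIntegrand g v r)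
      (∫ r, airyIntegrand (fun z => I * z * g z) v r) v := by
  obtain ⟨C, n, hC⟩ := hgrowth.I_mul_id_mul
  have hball (x : ℝ) (hx : x ∈ Metric.ball v 1) : |x| ≤ |v| + 1 := by
    have := abs_sub_abs_le_abs_sub x v
    rw [Metric.mem_ball, Real.dist_eq] at hx
    linarith
  exact (hasDerivAt_integral_of_dominated_loc_of_deriv_le (Metric.ball_mem_nhds v one_pos)
    (Filter.Eventually.of_forall (aestronglyMeasurable_airyIntegrand hg))
    (integrable_airyIntegrand hg hgrowth v)
    (aestronglyMeasurable_airyIntegrand (by fun_prop) v)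
    (Filter.Eventually.of_forall fun r x hx => norm_airyIntegrand_le hC (hball x hx) r)
    ((integrable_one_add_abs_pow_mul_exp_sub_cube n (|v| + 1)).const_mul C)
    (Filter.Eventually.of_forall fun r x _ => hasDerivAt_airyIntegrand g x r)).2

noncomputable def airyWeight (w : ℕ → ℂ) (k : ℕ) (z : ℂ) : ℂ :=
  ∏ j ∈ Finset.Icc 1 k, (w j - I * z)

lemma tFun_succ (k : ℕ) (w : ℕ → ℂ) (v : ℝ) :
    tFun (k + 1) w v = (1 / (2 * Real.pi)) * ∫ r, airyIntegrand (airyWeight w k) v r :=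
  rfl

lemma continuous_airyWeight (w : ℕ → ℂ) (k : ℕ) : Continuous (airyWeight w k) := by
  unfold airyWeight
  fun_prop

lemma polynomialGrowth_airyWeight (w : ℕ → ℂ) (k : ℕ) : PolynomialGrowth (airyWeight w k) :=
  PolynomialGrowth.finset_prod _ fun j _ => polynomialGrowth_const_sub_I_mul (w j)

lemma airyIntegrand_airyWeight_succ (w : ℕ → ℂ) (k : ℕ) (v r : ℝ) :
    airyIntegrand (airyWeight w (k + 1)) v r
      = w (k + 1) * airyIntegrand (airyWeight w k) v r
        - airyIntegrand (fun z => I * z * airyWeight w k z) v r := by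
  simp only [airyIntegrand, airyWeight, Finset.prod_Icc_succ_top (Nat.le_add_left 1 k)]
  ring

/-- for `m ≥ 2`, `v ↦ t^{(m−1)}(v; w_1, …, w_{m−2})` is differentiable and
`t^{(m)}(v; w_1, …, w_{m−1}) = w_{m−1}·t^{(m−1)}(v; w_1, …, w_{m−2}) − (d/dv)t^{(m−1)}(v; w_1, …, w_{m−2})`. -/
theorem tFun_recurrence (m : ℕ) (hm : 2 ≤ m) (w : ℕ → ℂ) (v : ℝ) :
    DifferentiableAt ℝ (tFun (m - 1) w) v ∧
      tFun m w v = w (m - 1) * tFun (m - 1) w v - deriv (tFun (m - 1) w) v := by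
  obtain ⟨k, rfl⟩ : ∃ k, m = k + 1 + 1 := ⟨m - 2, by omega⟩
  rw [show k + 1 + 1 - 1 = k + 1 from rfl]
  have hcont := continuous_airyWeight w k
  have hgrowth := polynomialGrowth_airyWeight w k
  have hderiv : HasDerivAt (tFun (k + 1) w)
      ((1 / (2 * Real.pi)) * ∫ r, airyIntegrand (fun z => I * z * airyWeight w k z) v r) v :=
    (hasDerivAt_integral_airyIntegrand hcont hgrowth v).const_mul _
  refine ⟨hderiv.differentiableAt, ?_⟩
  simp only [hderiv.deriv, tFun_succ, airyIntegrand_airyWeight_succ]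
  rw [integral_sub ((integrable_airyIntegrand hcont hgrowth v).const_mul _)
    (integrable_airyIntegrand (by fun_prop) hgrowth.I_mul_id_mul v), integral_const_mul]
  ring
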